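/- Fix q ∈ (2,4), α > 0 and μ > 0, and let u ∈ H¹(ℝ⁺, g dx) satisfy ∫₀^∞ u² g dx ≤ μ and Ẽ_{q,α}(u) < 0. Then u(0) ≠ 0 and |u(0)|^{4−q} ≤ (8α/q) μ; equivalently, |u(0)| ≤ ((8α/q) μ)^{1/(4−q)}. -/

import Mathlib

open MeasureTheory Set

noncomputable def g (x : ℝ) : ℝ := if x ≤ 1 then 4 else 4 * (2 * x - 1)

/-- `u` belongs to the weighted Sobolev space `H¹(ℝ⁺, g dx)` with derivative
`u'`: it is locally absolutely continuous on `[0,∞)` (primitive of `u'`) and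
both `u² g` and `u'² g` are integrable on `(0,∞)`. -/
def InH1g (u u' : ℝ → ℝ) : Prop :=
  IntegrableOn (fun x => (u x) ^ 2 * g x) (Ioi 0) ∧
    IntegrableOn (fun x => (u' x) ^ 2 * g x) (Ioi 0) ∧
    ∀ a b : ℝ, 0 ≤ a → 0 ≤ b → u b - u a = ∫ x in a..b, u' x

noncomputable def massg (u : ℝ → ℝ) : ℝ := ∫ x in Ioi (0 : ℝ), (u x) ^ 2 * g x

/-- The reduced energy `Ẽ_{q,α}(u) = (1/2)∫₀^∞ u'² g dx − (α/q)|u(0)|^q`. -/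
noncomputable def energyg (q α : ℝ) (u u' : ℝ → ℝ) : ℝ :=
  (1 / 2) * (∫ x in Ioi (0 : ℝ), (u' x) ^ 2 * g x) - (α / q) * |u 0| ^ q

/-- The set of reduced energies over `X_μ = {u : 0 < ∫ u² g ≤ μ}`;
its infimum is `𝓔̃_{q,α}(μ)`. -/
def levelSetg (q α μ : ℝ) : Set ℝ :=
  {E | ∃ u u' : ℝ → ℝ, InH1g u u' ∧ 0 < massg u ∧ massg u ≤ μ ∧
    E = energyg q α u u'}

/-!
Averaging `|u(0)| ≤ |u(b)| + ∫₀ᵀ |u'|` over `b ∈ (0, T]` and applying Cauchy–Schwarz gives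
`T u(0)² ≤ 2‖u‖² + 2T²‖u'‖²` (unweighted `L²(ℝ⁺)` norms) for every `T > 0`. A quadratic in `T`
that is nonnegative on `(0, ∞)` has nonpositive discriminant, so
`u(0)⁴ ≤ 16‖u‖²‖u'‖² ≤ (∫ u² g)(∫ u'² g)` as `g ≥ 4`. Negative energy bounds `∫ u'² g` by
`(2α/q)|u(0)|^q`, and dividing by `|u(0)|^q` gives the claim.
-/

lemma sq_le_four_mul_of_forall_pos_mul_le {x a b : ℝ} (hx : 0 ≤ x) (ha : 0 ≤ a) (hb : 0 ≤ b)
    (h : ∀ t > 0, x * t ≤ a + b * t ^ 2) : x ^ 2 ≤ 4 * a * b := by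
  have hquad : ∀ t : ℝ, 0 ≤ b * (t * t) + -x * t + a := by
    intro t
    rcases lt_or_ge 0 t with ht | ht
    · nlinarith [h t ht]
    · nlinarith [mul_nonneg hx (neg_nonneg.mpr ht), mul_self_nonneg t]
  have := discrim_le_zero hquad
  rw [discrim] at this
  linarith

section CauchySchwarz

variable {α : Type*} [MeasurableSpace α] {μ : Measure α} [IsFiniteMeasure μ] {f : α → ℝ}

lemma integrable_of_integrable_sq (hf : AEStronglyMeasurable f μ)
    (hf2 : Integrable (fun x => f x ^ 2) μ) : Integrable f μ :=
  ((memLp_two_iff_integrable_sq hf).2 hf2).integrable one_le_two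

lemma sq_integral_le_measureReal_mul_integral_sq (hf : AEStronglyMeasurable f μ)
    (hf2 : Integrable (fun x => f x ^ 2) μ) :
    (∫ x, f x ∂μ) ^ 2 ≤ μ.real univ * ∫ x, f x ^ 2 ∂μ := by
  have hint := integrable_of_integrable_sq hf hf2
  -- integrating `f x * t ≤ (f x * t)² / 2 + 1 / 2` gives a quadratic in `t` that is nonnegative
  have hquad : ∀ t : ℝ,
      0 ≤ (∫ x, f x ^ 2 ∂μ) / 2 * (t * t) + -(∫ x, f x ∂μ) * t + μ.real univ / 2 := by
    intro t
    have hle : ∫ x, f x * t ∂μ ≤ ∫ x, (f x ^ 2 / 2 * (t * t) + 1 / 2) ∂μ :=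
      integral_mono (hint.mul_const t) ((hf2.div_const 2).mul_const _ |>.add (integrable_const _))
        fun x => by nlinarith [sq_nonneg (f x * t - 1)]
    rw [integral_add ((hf2.div_const 2).mul_const _) (integrable_const _), integral_const,
      smul_eq_mul, integral_mul_const, integral_mul_const, integral_div] at hle
    linarith
  have := discrim_le_zero hquad
  rw [discrim] at this
  linarith

end CauchySchwarz

lemma mul_sq_le_of_sub_eq_intervalIntegral {u u' : ℝ → ℝ} {T : ℝ} (hT : 0 < T)
    (hFTC : ∀ b ∈ Ioc 0 T, u b - u 0 = ∫ x in 0..b, u' x)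
    (hu : IntegrableOn (fun x => u x ^ 2) (Ioc 0 T))
    (hu' : IntegrableOn (fun x => |u' x|) (Ioc 0 T)) :
    T * u 0 ^ 2 ≤ 2 * (∫ x in Ioc 0 T, u x ^ 2) + 2 * T * (∫ x in Ioc 0 T, |u' x|) ^ 2 := by
  set C := ∫ x in Ioc 0 T, |u' x|
  have hpoint : ∀ b ∈ Ioc 0 T, u 0 ^ 2 ≤ 2 * u b ^ 2 + 2 * C ^ 2 := by
    intro b hb
    have hdiff : |u b - u 0| ≤ C := calc
      |u b - u 0| = |∫ x in 0..b, u' x| := by rw [hFTC b hb]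
      _ ≤ ∫ x in 0..b, |u' x| := intervalIntegral.abs_integral_le_integral_abs hb.1.le
      _ = ∫ x in Ioc 0 b, |u' x| := intervalIntegral.integral_of_le hb.1.le
      _ ≤ C := setIntegral_mono_set hu' (ae_of_all _ fun _ => abs_nonneg _)
          (Ioc_subset_Ioc_right hb.2).eventuallyLE
    have hsq : (u b - u 0) ^ 2 ≤ C ^ 2 := sq_le_sq' (abs_le.mp hdiff).1 (abs_le.mp hdiff).2
    nlinarith [sq_nonneg (u b + (u b - u 0))]
  have hC : IntegrableOn (fun _ => 2 * C ^ 2) (Ioc 0 T) := integrableOn_const measure_Ioc_lt_top.ne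
  have hR : IntegrableOn (fun x => 2 * u x ^ 2 + 2 * C ^ 2) (Ioc 0 T) := (hu.const_mul 2).add hC
  calc T * u 0 ^ 2 = ∫ _ in Ioc 0 T, u 0 ^ 2 := by
        rw [setIntegral_const, Real.volume_real_Ioc_of_le hT.le, sub_zero, smul_eq_mul]
    _ ≤ ∫ x in Ioc 0 T, (2 * u x ^ 2 + 2 * C ^ 2) :=
        setIntegral_mono_on (integrableOn_const measure_Ioc_lt_top.ne) hR
          measurableSet_Ioc hpoint
    _ = 2 * (∫ x in Ioc 0 T, u x ^ 2) + 2 * T * C ^ 2 := by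
        rw [integral_add (hu.const_mul 2) hC, integral_const_mul, setIntegral_const,
          Real.volume_real_Ioc_of_le hT.le, sub_zero, smul_eq_mul]
        ring

lemma four_le_g (x : ℝ) : 4 ≤ g x := by
  unfold g
  split_ifs with h
  · exact le_rfl
  · linarith [not_le.mp h]

lemma g_pos (x : ℝ) : 0 < g x := four_pos.trans_le (four_le_g x)

lemma measurable_g : Measurable g :=
  Measurable.ite measurableSet_Iic measurable_const (by fun_prop)

section Weighted

variable {v : ℝ → ℝ} {s : Set ℝ}

lemma integrableOn_sq_of_integrableOn_sq_mul_g (h : IntegrableOn (fun x => v x ^ 2 * g x) s) :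
    IntegrableOn (fun x => v x ^ 2) s := by
  have hinv : ∀ x, ‖(g x)⁻¹‖ ≤ 4⁻¹ := fun x => by
    rw [norm_inv, Real.norm_of_nonneg (g_pos x).le]
    exact inv_anti₀ four_pos (four_le_g x)
  refine (h.bdd_mul measurable_g.inv.aestronglyMeasurable (ae_of_all _ hinv)).congr
    (ae_of_all _ fun x => ?_)
  have := (g_pos x).ne'
  simp only [Pi.inv_apply]
  field_simp

lemma four_mul_setIntegral_sq_le (h : IntegrableOn (fun x => v x ^ 2 * g x) s) :
    4 * ∫ x in s, v x ^ 2 ≤ ∫ x in s, v x ^ 2 * g x := by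
  rw [← integral_const_mul]
  exact integral_mono ((integrableOn_sq_of_integrableOn_sq_mul_g h).const_mul 4) h
    fun x => by nlinarith [four_le_g x, sq_nonneg (v x)]

end Weighted

lemma InH1g.pow_four_le {u u' : ℝ → ℝ} (hu : InH1g u u') :
    u 0 ^ 4 ≤ massg u * ∫ x in Ioi 0, u' x ^ 2 * g x := by
  obtain ⟨hU, hU', hFTC⟩ := hu
  have hP := integrableOn_sq_of_integrableOn_sq_mul_g hU
  have hQ := integrableOn_sq_of_integrableOn_sq_mul_g hU'
  set P := ∫ x in Ioi 0, u x ^ 2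
  set Q := ∫ x in Ioi 0, u' x ^ 2
  have hbound : ∀ T > 0, u 0 ^ 2 * T ≤ 2 * P + 2 * Q * T ^ 2 := by
    intro T hT
    have : IsFiniteMeasure (volume.restrict (Ioc (0 : ℝ) T)) :=
      isFiniteMeasure_restrict.2 measure_Ioc_lt_top.ne
    have hQT : IntegrableOn (fun x => |u' x| ^ 2) (Ioc 0 T) := by
      simpa only [sq_abs] using hQ.mono_set Ioc_subset_Ioi_self
    have hmeas : AEStronglyMeasurable (fun x => |u' x|) (volume.restrict (Ioc 0 T)) := by
      simpa only [Real.sqrt_sq_eq_abs] using Real.continuous_sqrt.comp_aestronglyMeasurable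
        (hQ.mono_set Ioc_subset_Ioi_self).aestronglyMeasurable
    have htrace := mul_sq_le_of_sub_eq_intervalIntegral hT (fun b hb => hFTC 0 b le_rfl hb.1.le)
      (hP.mono_set Ioc_subset_Ioi_self) (integrable_of_integrable_sq hmeas hQT)
    have hcs : (∫ x in Ioc 0 T, |u' x|) ^ 2 ≤ T * ∫ x in Ioc 0 T, u' x ^ 2 := by
      simpa only [sq_abs, measureReal_restrict_apply_univ, Real.volume_real_Ioc_of_le hT.le,
        sub_zero] using sq_integral_le_measureReal_mul_integral_sq hmeas hQT
    have hPT : ∫ x in Ioc 0 T, u x ^ 2 ≤ P := setIntegral_mono_set hP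
      (ae_of_all _ fun _ => sq_nonneg _) Ioc_subset_Ioi_self.eventuallyLE
    have hQT' : ∫ x in Ioc 0 T, u' x ^ 2 ≤ Q := setIntegral_mono_set hQ
      (ae_of_all _ fun _ => sq_nonneg _) Ioc_subset_Ioi_self.eventuallyLE
    nlinarith [mul_le_mul_of_nonneg_left hcs (by positivity : (0 : ℝ) ≤ 2 * T),
      mul_le_mul_of_nonneg_left hQT' (sq_nonneg T)]
  have hPM : 4 * P ≤ massg u := four_mul_setIntegral_sq_le hU
  calc u 0 ^ 4 = (u 0 ^ 2) ^ 2 := by ring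
    _ ≤ 4 * (2 * P) * (2 * Q) := sq_le_four_mul_of_forall_pos_mul_le (sq_nonneg _)
        (by positivity) (by positivity) hbound
    _ = (4 * P) * (4 * Q) := by ring
    _ ≤ massg u * ∫ x in Ioi 0, u' x ^ 2 * g x :=
        mul_le_mul hPM (four_mul_setIntegral_sq_le hU') (by positivity)
          ((by positivity : (0 : ℝ) ≤ 4 * P).trans hPM)

theorem stmt14_general (q α μ : ℝ) (hq : 2 < q) (hα : 0 < α) (hμ : 0 < μ)
    (u u' : ℝ → ℝ) (hu : InH1g u u') (hm : massg u ≤ μ)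
    (hE : energyg q α u u' < 0) :
    u 0 ≠ 0 ∧ |u 0| ^ (4 - q) ≤ 8 * α / q * μ := by
  set A := ∫ x in Ioi (0 : ℝ), u' x ^ 2 * g x
  have hA : 0 ≤ A := setIntegral_nonneg measurableSet_Ioi fun x _ =>
    mul_nonneg (sq_nonneg _) (g_pos x).le
  have hq0 : 0 < q := by linarith
  have hAlt : A < 2 * (α / q) * |u 0| ^ q := by
    unfold energyg at hE
    linarith
  have hu0 : u 0 ≠ 0 := by
    intro h
    rw [h, abs_zero, Real.zero_rpow hq0.ne'] at hAlt
    linarith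
  have hpos : 0 < |u 0| ^ q := Real.rpow_pos_of_pos (abs_pos.2 hu0) q
  refine ⟨hu0, ?_⟩
  rw [Real.rpow_sub (abs_pos.2 hu0), div_le_iff₀ hpos, show (4 : ℝ) = (4 : ℕ) by norm_num,
    Real.rpow_natCast, pow_abs, abs_of_nonneg (by positivity)]
  calc u 0 ^ 4 ≤ massg u * A := hu.pow_four_le
    _ ≤ μ * (2 * (α / q) * |u 0| ^ q) :=
        mul_le_mul hm hAlt.le hA hμ.le
    _ ≤ 8 * α / q * μ * |u 0| ^ q := by
        rw [mul_div_assoc]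
        nlinarith [mul_pos (mul_pos (div_pos hα hq0) hμ) hpos]

/-- If `u ∈ H¹(ℝ⁺, g dx)` has weighted mass at most `μ` and negative reduced
energy, then `u(0) ≠ 0` and `|u(0)|^{4−q} ≤ (8α/q)μ`. -/
theorem stmt14 (q α μ : ℝ) (hq : 2 < q) (hq' : q < 4) (hα : 0 < α) (hμ : 0 < μ)
    (u u' : ℝ → ℝ) (hu : InH1g u u') (hm : massg u ≤ μ)
    (hE : energyg q α u u' < 0) :
    u 0 ≠ 0 ∧ |u 0| ^ (4 - q) ≤ 8 * α / q * μ :=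
  stmt14_general q α μ hq hα hμ u u' hu hm hE
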